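/- Let p = 2 and let f ∈ F^coord_{0,(L₁,L₂)}(ℝ^d). For ℓ ∈ {1,2}, let x₀ ∈ ℝ^d and x₁ = x₀ − (1/L_ℓ) U_ℓ ∇^{(ℓ)} f(x₀) (one exact-step partial gradient update on block ℓ). Then f(x₀) − f(x₁) ≥ (1/(2L_ℓ)) ( ‖∇^{(ℓ)} f(x₀)‖² + ‖∇^{(ℓ)} f(x₁)‖² ). -/

import Mathlib

open RealInnerProductSpace

noncomputable section

/-- The `ℓ`-th block `ℝ^{d_ℓ}` of the decomposition `ℝ^d = ℝ^{d_1} × … × ℝ^{d_p}`. -/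
abbrev Blk {p : ℕ} (d : Fin p → ℕ) (ℓ : Fin p) : Type := EuclideanSpace ℝ (Fin (d ℓ))

/-- The space `ℝ^d = ℝ^{d_1} × … × ℝ^{d_p}` with the Euclidean (ℓ²) norm. -/
abbrev Sp {p : ℕ} (d : Fin p → ℕ) : Type := PiLp 2 (Blk d)

/-- The selection embedding `U_ℓ : ℝ^{d_ℓ} → ℝ^d` placing `h` in block `ℓ` and `0` elsewhere. -/
def inj {p : ℕ} (d : Fin p → ℕ) (ℓ : Fin p) (h : Blk d ℓ) : Sp d :=
  (WithLp.equiv 2 (∀ ℓ, Blk d ℓ)).symm (Pi.single ℓ h)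

/-- Membership in the class `F^coord_{0,L}(ℝ^d)`: convex, differentiable, and for each block
`ℓ` the partial gradient `∇^{(ℓ)} f` is `L_ℓ`-Lipschitz along the block `ℓ`. -/
def IsCoordSmooth {p : ℕ} (d : Fin p → ℕ) (L : Fin p → ℝ) (f : Sp d → ℝ) : Prop :=
  ConvexOn ℝ Set.univ f ∧ Differentiable ℝ f ∧
    ∀ (ℓ : Fin p) (x : Sp d) (h : Blk d ℓ),
      ‖gradient f (x + inj d ℓ h) ℓ - gradient f x ℓ‖ ≤ L ℓ * ‖h‖

/-! Put `gᵢ = ∇^{(ℓ)} f(xᵢ)` and `w = x₁ + U_ℓ (g₁ / L_ℓ) = x₀ + U_ℓ ((g₁ - g₀) / L_ℓ)`.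
Convexity at `x₁` gives `f x₁ + ‖g₁‖² / L_ℓ ≤ f w`, and the descent lemma along block `ℓ` at `x₀`
gives `f w ≤ f x₀ + (‖g₁‖² - ‖g₀‖²) / (2 L_ℓ)`. -/

open Set

section Gradient

variable {E : Type*} [NormedAddCommGroup E] [InnerProductSpace ℝ E] [CompleteSpace E]
  {f : E → ℝ} {x v : E}

theorem hasDerivAt_comp_add_smul {t : ℝ} (hf : DifferentiableAt ℝ f (x + t • v)) :
    HasDerivAt (fun s : ℝ => f (x + s • v)) ⟪gradient f (x + t • v), v⟫ t := by
  have hline : HasDerivAt (fun s : ℝ => x + s • v) v t := by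
    simpa using ((hasDerivAt_id t).smul_const v).const_add x
  simpa [Function.comp_def, InnerProductSpace.toDual_apply_apply] using
    (hasGradientAt_iff_hasFDerivAt.mp hf.hasGradientAt).comp_hasDerivAt t hline

theorem ConvexOn.add_inner_gradient_le (hconv : ConvexOn ℝ univ f)
    (hf : DifferentiableAt ℝ f x) (y : E) : f x + ⟪gradient f x, y - x⟫ ≤ f y := by
  have hline : ConvexOn ℝ univ fun t : ℝ => f (x + t • (y - x)) := by
    simpa [Function.comp_def, AffineMap.lineMap_apply, add_comm] using
      hconv.comp_affineMap (AffineMap.lineMap x y)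
  have hderiv := hasDerivAt_comp_add_smul (t := 0) (v := y - x) (by simpa using hf)
  have := hline.le_slope_of_hasDerivAt (mem_univ 0) (mem_univ 1) one_pos hderiv
  simp only [slope_def_field, zero_smul, add_zero, one_smul, add_sub_cancel, sub_zero,
    div_one] at this
  linarith

theorem le_add_inner_gradient_add_of_inner_gradient_sub_le (hf : Differentiable ℝ f) {C : ℝ}
    (hC : ∀ t ∈ Icc (0 : ℝ) 1, ⟪gradient f (x + t • v) - gradient f x, v⟫ ≤ C * t) :
    f (x + v) ≤ f x + ⟪gradient f x, v⟫ + C / 2 := by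
  have hderiv (t : ℝ) := hasDerivAt_comp_add_smul (x := x) (v := v) (t := t) (hf _)
  have hquad (t : ℝ) : HasDerivAt (fun s : ℝ => f x + s * ⟪gradient f x, v⟫ + C / 2 * s ^ 2)
      (⟪gradient f x, v⟫ + C * t) t := by
    refine ((((hasDerivAt_id t).mul_const ⟪gradient f x, v⟫).const_add (f x)).add
      ((hasDerivAt_pow 2 t).const_mul (C / 2))).congr_deriv ?_
    simp only [Nat.cast_ofNat]
    ring
  have hslope (t : ℝ) (ht : t ∈ Icc (0 : ℝ) 1) :
      ⟪gradient f (x + t • v), v⟫ ≤ ⟪gradient f x, v⟫ + C * t := by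
    linarith [inner_sub_left (𝕜 := ℝ) (gradient f (x + t • v)) (gradient f x) v, hC t ht]
  simpa using image_le_of_deriv_right_le_deriv_boundary (a := 0) (b := 1)
    (fun t _ => (hderiv t).continuousAt.continuousWithinAt)
    (fun t _ => (hderiv t).hasDerivWithinAt) (by simp)
    (fun t _ => (hquad t).continuousAt.continuousWithinAt)
    (fun t _ => (hquad t).hasDerivWithinAt)
    (fun t ht => hslope t (Ico_subset_Icc_self ht)) (right_mem_Icc.2 zero_le_one)

end Gradient

section Blocks

variable {p : ℕ} {d : Fin p → ℕ}

theorem inj_eq_single (ℓ : Fin p) (h : Blk d ℓ) : inj d ℓ h = PiLp.single 2 ℓ h := rfl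

theorem inj_smul (ℓ : Fin p) (a : ℝ) (h : Blk d ℓ) : inj d ℓ (a • h) = a • inj d ℓ h := by
  ext i : 1
  by_cases hi : i = ℓ
  · subst hi; simp [inj_eq_single]
  · simp [inj_eq_single, hi]

theorem inj_sub (ℓ : Fin p) (h h' : Blk d ℓ) : inj d ℓ (h - h') = inj d ℓ h - inj d ℓ h' :=
  PiLp.single_sub 2 ℓ

theorem inner_inj_right (ℓ : Fin p) (v : Sp d) (h : Blk d ℓ) : ⟪v, inj d ℓ h⟫ = ⟪v ℓ, h⟫ := by
  rw [PiLp.inner_apply, Finset.sum_eq_single ℓ (fun i _ hi => by simp [inj_eq_single, hi])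
    (by simp)]
  simp [inj_eq_single]

theorem IsCoordSmooth.apply_add_inj_le {L : Fin p → ℝ} {f : Sp d → ℝ} (hf : IsCoordSmooth d L f)
    (ℓ : Fin p) (x : Sp d) (h : Blk d ℓ) :
    f (x + inj d ℓ h) ≤ f x + ⟪gradient f x ℓ, h⟫ + L ℓ / 2 * ‖h‖ ^ 2 := by
  obtain ⟨-, hdiff, hlip⟩ := hf
  have hC (t : ℝ) (ht : t ∈ Icc (0 : ℝ) 1) :
      ⟪gradient f (x + t • inj d ℓ h) - gradient f x, inj d ℓ h⟫ ≤ L ℓ * ‖h‖ ^ 2 * t := by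
    rw [inner_inj_right, ← inj_smul, PiLp.sub_apply]
    calc ⟪gradient f (x + inj d ℓ (t • h)) ℓ - gradient f x ℓ, h⟫
        ≤ ‖gradient f (x + inj d ℓ (t • h)) ℓ - gradient f x ℓ‖ * ‖h‖ := real_inner_le_norm _ _
      _ ≤ L ℓ * ‖t • h‖ * ‖h‖ := by gcongr; exact hlip ℓ x (t • h)
      _ = L ℓ * ‖h‖ ^ 2 * t := by rw [norm_smul, Real.norm_of_nonneg ht.1]; ring
  have := le_add_inner_gradient_add_of_inner_gradient_sub_le hdiff hC
  rw [inner_inj_right] at this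
  linarith

theorem IsCoordSmooth.apply_add_inj_inv_smul_sub_le {L : Fin p → ℝ} {f : Sp d → ℝ}
    (hf : IsCoordSmooth d L f) {ℓ : Fin p} (hL : 0 < L ℓ) (x : Sp d) (g : Blk d ℓ) :
    f (x + inj d ℓ ((L ℓ)⁻¹ • (g - gradient f x ℓ))) ≤
      f x + (‖g‖ ^ 2 - ‖gradient f x ℓ‖ ^ 2) / (2 * L ℓ) := by
  refine (hf.apply_add_inj_le ℓ x _).trans_eq ?_
  rw [real_inner_smul_right, norm_smul, Real.norm_of_nonneg (inv_nonneg.2 hL.le), inner_sub_right,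
    mul_pow, norm_sub_sq_real, real_inner_self_eq_norm_sq, real_inner_comm]
  field_simp
  ring

end Blocks

theorem descent_lemma_two_block_ccd {d : Fin 2 → ℕ} (L : Fin 2 → ℝ)
    (hL : ∀ ℓ, 0 < L ℓ) (f : Sp d → ℝ) (hf : IsCoordSmooth d L f)
    (ℓ : Fin 2) (x₀ x₁ : Sp d)
    (hstep : x₁ = x₀ - (L ℓ)⁻¹ • inj d ℓ (gradient f x₀ ℓ)) :
    f x₀ - f x₁ ≥ 1 / (2 * L ℓ) * (‖gradient f x₀ ℓ‖ ^ 2 + ‖gradient f x₁ ℓ‖ ^ 2) := by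
  set g₀ := gradient f x₀ ℓ
  set g₁ := gradient f x₁ ℓ
  have hw : x₁ + inj d ℓ ((L ℓ)⁻¹ • g₁) = x₀ + inj d ℓ ((L ℓ)⁻¹ • (g₁ - g₀)) := by
    rw [hstep, inj_smul, inj_smul, inj_sub]
    module
  have hlower : f x₁ + (L ℓ)⁻¹ * ‖g₁‖ ^ 2 ≤ f (x₁ + inj d ℓ ((L ℓ)⁻¹ • g₁)) := by
    have := hf.1.add_inner_gradient_le (hf.2.1 x₁) (x₁ + inj d ℓ ((L ℓ)⁻¹ • g₁))
    rwa [add_sub_cancel_left, inner_inj_right, real_inner_smul_right,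
      real_inner_self_eq_norm_sq] at this
  have hupper := hf.apply_add_inj_inv_smul_sub_le (hL ℓ) x₀ g₁
  rw [← hw] at hupper
  have hsplit : 1 / (2 * L ℓ) * (‖g₀‖ ^ 2 + ‖g₁‖ ^ 2) =
      (L ℓ)⁻¹ * ‖g₁‖ ^ 2 - (‖g₁‖ ^ 2 - ‖g₀‖ ^ 2) / (2 * L ℓ) := by
    field_simp
    ring
  linarith
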